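/- arXiv:1212.4777 — 4 statements merged into one kernel-verified Lean document; each statement's English description precedes it below -/
import Mathlib

section
/- Let K be a positive integer and let t ≥ 0 be a real number with 5·√K·t ≤ 1. If λ₁, …, λ_K are real numbers satisfying ∑_{i=1}^K λ_i² ≤ K·t², then ∏_{i=1}^K (1 + λ_i) ≥ (1 − t)^K. -/
/-!
For `0 < t < 1` and `x ≥ 2t - 1` one has the quadratic minorant
`log (1 + x) ≥ log (1 - t) + (t² - x²) / (2t(1 - t))`, which touches `log (1 + x)` at `x = -t`.
Summing it over the `λ_i`, the quadratic terms add up to `(K t² - ∑ λ_i²) / (2t(1 - t)) ≥ 0`,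
so `∑ log (1 + λ_i) ≥ K log (1 - t)`.
-/

open Finset

lemma log_one_sub_add_div_le_log_one_add {t x : ℝ} (ht0 : 0 < t) (ht1 : t < 1)
    (hx : 2 * t - 1 ≤ x) :
    Real.log (1 - t) + (t ^ 2 - x ^ 2) / (2 * t * (1 - t)) ≤ Real.log (1 + x) := by
  have h1x : 0 < 1 + x := by linarith
  have h1t : 0 < 1 - t := by linarith
  have hlog : Real.log (1 - t) - Real.log (1 + x) ≤ (1 - t) / (1 + x) - 1 := by
    rw [← Real.log_div h1t.ne' h1x.ne']
    exact Real.log_le_sub_one_of_pos (div_pos h1t h1x)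
  -- cleared of denominators, the gap is `(x + t)² (x + 1 - 2t) ≥ 0`
  have hquad : (t ^ 2 - x ^ 2) / (2 * t * (1 - t)) ≤ (x + t) / (1 + x) := by
    rw [div_le_div_iff₀ (by positivity) h1x]
    nlinarith [mul_nonneg (sq_nonneg (x + t)) (sub_nonneg.2 hx)]
  have hsplit : (x + t) / (1 + x) = 1 - (1 - t) / (1 + x) := by
    field_simp
    ring
  linarith

lemma pow_one_sub_le_prod_one_add {ι : Type*} (s : Finset ι) {t : ℝ} (ht0 : 0 ≤ t)
    (ht1 : t < 1) {x : ι → ℝ} (hx : ∀ i ∈ s, 2 * t - 1 ≤ x i)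
    (hsum : ∑ i ∈ s, x i ^ 2 ≤ #s * t ^ 2) :
    (1 - t) ^ #s ≤ ∏ i ∈ s, (1 + x i) := by
  rcases ht0.eq_or_lt with rfl | htpos
  · have hzero : ∀ i ∈ s, x i ^ 2 = 0 :=
      (sum_eq_zero_iff_of_nonneg fun i _ => sq_nonneg (x i)).1
        (le_antisymm (by simpa using hsum) (sum_nonneg fun i _ => sq_nonneg (x i)))
    rw [prod_congr rfl fun i hi => by rw [pow_eq_zero_iff two_ne_zero |>.1 (hzero i hi)]]
    simp
  have hpos : ∀ i ∈ s, 0 < 1 + x i := fun i hi => by linarith [hx i hi]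
  have hden : 0 < 2 * t * (1 - t) := by nlinarith
  rw [← Real.log_le_log_iff (pow_pos (by linarith) _) (prod_pos hpos), Real.log_pow,
    Real.log_prod fun i hi => (hpos i hi).ne']
  calc (#s : ℝ) * Real.log (1 - t)
      ≤ #s * Real.log (1 - t) + (#s * t ^ 2 - ∑ i ∈ s, x i ^ 2) / (2 * t * (1 - t)) :=
        le_add_of_nonneg_right (div_nonneg (sub_nonneg.2 hsum) hden.le)
    _ = ∑ i ∈ s, (Real.log (1 - t) + (t ^ 2 - x i ^ 2) / (2 * t * (1 - t))) := by
        rw [sum_add_distrib, ← sum_div, sum_sub_distrib]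
        simp
    _ ≤ ∑ i ∈ s, Real.log (1 + x i) :=
        sum_le_sum fun i hi => log_one_sub_add_div_le_log_one_add htpos ht1 (hx i hi)

/-- If `λ₁, …, λ_K` satisfy `∑ λ_i² ≤ K·t²` with `5·√K·t ≤ 1`, then
`∏ (1 + λ_i) ≥ (1 − t)^K`. -/
theorem stmt_0 (K : ℕ) (hK : 0 < K) (t : ℝ) (ht : 0 ≤ t)
    (h5 : 5 * Real.sqrt K * t ≤ 1) (lam : Fin K → ℝ)
    (hsum : ∑ i, lam i ^ 2 ≤ (K : ℝ) * t ^ 2) :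
    (1 - t) ^ K ≤ ∏ i, (1 + lam i) := by
  have hsqrtK : 1 ≤ Real.sqrt K := Real.one_le_sqrt.2 (by exact_mod_cast hK)
  have ht5 : t ≤ 1 / 5 := by nlinarith
  have hlam : ∀ i, |lam i| ≤ Real.sqrt K * t := fun i =>
    abs_le_of_sq_le_sq (by
      rw [mul_pow, Real.sq_sqrt K.cast_nonneg]
      exact (single_le_sum (fun j _ => sq_nonneg (lam j)) (mem_univ i)).trans hsum)
      (by positivity)
  have hlower : ∀ i ∈ univ, 2 * t - 1 ≤ lam i := fun i _ => by
    linarith [neg_abs_le (lam i), hlam i]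
  simpa using pow_one_sub_le_prod_one_add univ ht (by linarith) hlower (by simpa using hsum)
end

section
/- Let A and E be K×K real matrices and let γ > 0, δ ≥ 0 with γ > 5·√K·δ. Assume A is invertible with smallest singular value at least γ (i.e., ‖A x‖ ≥ γ‖x‖ for every vector x ∈ ℝ^K), and assume the Frobenius norm of E satisfies ‖E‖_F ≤ √K·δ. Then det(A+E)/det(A) ≥ (1 − δ/γ)^K. -/
/-!
Write `A + E = A (1 + B)` with `B = A⁻¹ E`; the singular value bound gives, column by column,
`‖B‖_F ≤ ‖E‖_F / γ ≤ √K s` with `s = δ / γ`. Triangularising `B` by a unitary conjugation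
(Schur) gives `det (1 + B) = ∏ (1 + dᵢ)` with `∑ |dᵢ|² ≤ ‖B‖_F² ≤ K s²`, hence
`|det (1 + B)| ≥ ∏ (1 - |dᵢ|)`. Since `u ↦ log (1 - √u)` is convex and decreasing on `[0, 1/4]`,
Jensen's inequality bounds this product below by `(1 - s)^K`. Finally `det (1 + B) > 0`, because
the same bound keeps `det (1 + x B)` away from zero for `x ∈ [0, 1]`.
-/

open Finset Matrix

/-- The tangent line at `s ^ 2` of the function `u ↦ log (1 - √u)`, which is convex for
`√u ≤ 1/2`. -/
lemma Real.log_one_sub_tangent_le {s t : ℝ} (hs : 0 < s) (hs1 : s < 1) (hts : t + 2 * s ≤ 1) :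
    Real.log (1 - s) - (t ^ 2 - s ^ 2) / (2 * s * (1 - s)) ≤ Real.log (1 - t) := by
  have h1s : 0 < 1 - s := by linarith
  have h1t : 0 < 1 - t := by linarith
  have hlog : Real.log (1 - s) - Real.log (1 - t) ≤ (t - s) / (1 - t) := by
    have := Real.log_le_sub_one_of_pos (div_pos h1s h1t)
    rw [Real.log_div h1s.ne' h1t.ne'] at this
    convert this using 1
    field_simp
    ring
  have hchord : (t - s) / (1 - t) ≤ (t ^ 2 - s ^ 2) / (2 * s * (1 - s)) := by
    rw [div_le_div_iff₀ h1t (by positivity)]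
    nlinarith [mul_nonneg (sq_nonneg (t - s)) (by linarith : (0 : ℝ) ≤ 1 - t - 2 * s)]
  linarith

lemma pow_one_sub_le_prod_one_sub {ι : Type*} [Fintype ι] {s : ℝ} (hs : 0 ≤ s) (t : ι → ℝ)
    (ht : ∑ i, t i ^ 2 ≤ Fintype.card ι * s ^ 2) (hs9 : Fintype.card ι * s ^ 2 ≤ 1 / 9) :
    (1 - s) ^ Fintype.card ι ≤ ∏ i, (1 - t i) := by
  have ht_le : ∀ i, t i ^ 2 ≤ Fintype.card ι * s ^ 2 := fun i =>
    (single_le_sum (fun j _ => sq_nonneg (t j)) (mem_univ i)).trans ht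
  rcases hs.eq_or_lt with rfl | hs
  · have ht0 : ∀ i, t i = 0 := fun i => by nlinarith [ht_le i, sq_nonneg (t i)]
    simp [ht0]
  by_cases hι : IsEmpty ι
  · simp
  have hcard : (1 : ℝ) ≤ Fintype.card ι := by
    exact_mod_cast Fintype.card_pos_iff.mpr (not_isEmpty_iff.mp hι)
  have hs3 : s ≤ 1 / 3 := by nlinarith
  have hts : ∀ i, t i + 2 * s ≤ 1 := fun i => by nlinarith [ht_le i]
  have h1s : 0 < 1 - s := by linarith
  have h1t : ∀ i, 0 < 1 - t i := fun i => by linarith [hts i]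
  have hsum : ∑ i, (Real.log (1 - s) - (t i ^ 2 - s ^ 2) / (2 * s * (1 - s))) ≤
      ∑ i, Real.log (1 - t i) :=
    sum_le_sum fun i _ => Real.log_one_sub_tangent_le hs (by linarith) (hts i)
  rw [sum_sub_distrib, ← sum_div, sum_sub_distrib] at hsum
  simp only [sum_const, card_univ, nsmul_eq_mul] at hsum
  rw [← Real.log_le_log_iff (pow_pos h1s _) (prod_pos fun i _ => h1t i), Real.log_pow,
    Real.log_prod fun i _ => (h1t i).ne']
  have : (∑ i, t i ^ 2 - Fintype.card ι * s ^ 2) / (2 * s * (1 - s)) ≤ 0 :=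
    div_nonpos_of_nonpos_of_nonneg (by linarith) (by nlinarith)
  linarith

lemma Fin.add_sum_sum_succ_le {n : ℕ} {f : Fin (n + 1) → Fin (n + 1) → ℝ}
    (hf : ∀ i j, 0 ≤ f i j) :
    f 0 0 + ∑ i : Fin n, ∑ j : Fin n, f i.succ j.succ ≤ ∑ i, ∑ j, f i j := by
  rw [Fin.sum_univ_succ]
  simp only [Fin.sum_univ_succ (f := f _)]
  have hrow := sum_nonneg fun j (_ : j ∈ univ) => hf 0 (Fin.succ j)
  have hcol := sum_le_sum fun (i : Fin n) (_ : i ∈ univ) =>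
    le_add_of_nonneg_left (a := ∑ j : Fin n, f i.succ j.succ) (hf i.succ 0)
  linarith

namespace Matrix

section Frobenius

variable {m n 𝕜 : Type*} [Fintype m] [Fintype n] [RCLike 𝕜]

lemma trace_conjTranspose_mul_self_eq_sum (X : Matrix m n 𝕜) :
    (Xᴴ * X).trace = ((∑ i, ∑ j, ‖X i j‖ ^ 2 : ℝ) : 𝕜) := by
  rw [trace, sum_comm]
  push_cast
  refine sum_congr rfl fun j _ => sum_congr rfl fun i _ => ?_
  simp [RCLike.conj_mul]

lemma sum_norm_sq_unitary_conj [DecidableEq n] {U : Matrix n n 𝕜}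
    (hU : U ∈ unitaryGroup n 𝕜) (B : Matrix n n 𝕜) :
    ∑ i, ∑ j, ‖(star U * B * U) i j‖ ^ 2 = ∑ i, ∑ j, ‖B i j‖ ^ 2 := by
  apply RCLike.ofReal_injective (K := 𝕜)
  rw [← trace_conjTranspose_mul_self_eq_sum, ← trace_conjTranspose_mul_self_eq_sum]
  have hUU : U * star U = 1 := mem_unitaryGroup_iff.mp hU
  rw [← star_eq_conjTranspose, ← star_eq_conjTranspose, star_mul, star_mul, star_star]
  calc (star U * (star B * U) * (star U * B * U)).trace
      = (star U * (star B * (U * star U) * B) * U).trace := by simp only [mul_assoc]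
    _ = (star B * B).trace := by rw [hUU, mul_one, trace_mul_cycle, hUU, one_mul]

end Frobenius

lemma det_eq_mul_det_submatrix_succ_of_col_zero {R : Type*} [CommRing R] {n : ℕ}
    {C : Matrix (Fin (n + 1)) (Fin (n + 1)) R} (hC : ∀ i ≠ 0, C i 0 = 0) :
    C.det = C 0 0 * (C.submatrix Fin.succ Fin.succ).det := by
  rw [det_succ_column_zero, sum_eq_single 0 (fun i _ hi => by rw [hC i hi]; ring) (by simp)]
  simp

/-- Conjugating by a unitary whose first column is a unit eigenvector of `B`. -/
lemma exists_unitary_conj_col_zero_eq_zero {n : ℕ} (B : Matrix (Fin (n + 1)) (Fin (n + 1)) ℂ) :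
    ∃ U ∈ unitaryGroup (Fin (n + 1)) ℂ, ∀ i ≠ 0, (star U * B * U) i 0 = 0 := by
  obtain ⟨μ, hμ⟩ := Module.End.exists_eigenvalue (toEuclideanLin B)
  obtain ⟨v, hv⟩ := hμ.exists_hasEigenvector
  set u := (‖v‖ : ℂ)⁻¹ • v
  have hBu : toEuclideanLin B u = μ • u := by
    rw [map_smul, hv.apply_eq_smul, smul_comm]
  have hu : Orthonormal ℂ (({0} : Set (Fin (n + 1))).domRestrict fun _ => u) := by
    have : Subsingleton ({0} : Set (Fin (n + 1))) := Set.subsingleton_singleton.coe_sort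
    exact orthonormal_subsingleton_iff.mpr fun _ => norm_smul_inv_norm hv.2
  obtain ⟨b, hb⟩ := hu.exists_orthonormalBasis_extension_of_card_eq (by simp)
  have hb0 : b 0 = u := hb 0 rfl
  set U := (EuclideanSpace.basisFun _ ℂ).toBasis.toMatrix b
  refine ⟨U, (EuclideanSpace.basisFun _ ℂ).toMatrix_orthonormalBasis_mem_unitary b,
    fun i hi => ?_⟩
  have hentry : (star U * B * U) i 0 = inner ℂ (b i) (toEuclideanLin B (b 0)) := by
    simp only [U, mul_apply, star_apply, Module.Basis.toMatrix,
      OrthonormalBasis.coe_toBasis_repr_apply, EuclideanSpace.basisFun_repr, RCLike.star_def,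
      PiLp.inner_apply, ofLp_toLpLin, toLin'_apply, mulVec, dotProduct, RCLike.inner_apply]
    simp_rw [sum_mul]
    rw [sum_comm]
    exact sum_congr rfl fun _ _ => sum_congr rfl fun _ _ => by ring
  rw [hentry, hb0, hBu, inner_smul_right, ← hb0, b.orthonormal.2 hi, mul_zero]

/-- The `d i` are the diagonal entries of a Schur triangularisation of `B`. -/
theorem exists_det_one_add_eq_prod {n : ℕ} (B : Matrix (Fin n) (Fin n) ℂ) :
    ∃ d : Fin n → ℂ, (1 + B).det = ∏ i, (1 + d i) ∧
      ∑ i, ‖d i‖ ^ 2 ≤ ∑ i, ∑ j, ‖B i j‖ ^ 2 := by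
  induction n with
  | zero => exact ⟨Fin.elim0, by simp, by simp⟩
  | succ n ih =>
    obtain ⟨U, hU, hC⟩ := exists_unitary_conj_col_zero_eq_zero B
    set C := star U * B * U
    obtain ⟨d, hdet, hd⟩ := ih (C.submatrix Fin.succ Fin.succ)
    refine ⟨Fin.cons (C 0 0) d, ?_, ?_⟩
    · have hconj : (1 + C).det = (1 + B).det := by
        rw [show 1 + C = star U * (1 + B) * U by
          rw [mul_add, add_mul, mul_one, Unitary.star_mul_self_of_mem hU]]
        exact det_conj_of_mul_eq_one (Unitary.star_mul_self_of_mem hU)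
          (Unitary.mul_star_self_of_mem hU)
      have hC' : ∀ i ≠ 0, (1 + C) i 0 = 0 := fun i hi => by simp [one_apply_ne hi, hC i hi]
      have hsub : (1 + C).submatrix Fin.succ Fin.succ = 1 + C.submatrix Fin.succ Fin.succ := by
        ext i j
        simp [one_apply]
      rw [← hconj, det_eq_mul_det_submatrix_succ_of_col_zero hC', hsub, hdet, Fin.prod_univ_succ]
      simp
    · rw [Fin.sum_univ_succ]
      simp only [Fin.cons_zero, Fin.cons_succ]
      calc ‖C 0 0‖ ^ 2 + ∑ i, ‖d i‖ ^ 2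
          ≤ ‖C 0 0‖ ^ 2 + ∑ i : Fin n, ∑ j : Fin n, ‖C i.succ j.succ‖ ^ 2 :=
            add_le_add_right hd _
        _ ≤ ∑ i, ∑ j, ‖C i j‖ ^ 2 :=
          Fin.add_sum_sum_succ_le (f := fun i j => ‖C i j‖ ^ 2) fun _ _ => sq_nonneg _
        _ = ∑ i, ∑ j, ‖B i j‖ ^ 2 := sum_norm_sq_unitary_conj hU B

theorem pow_one_sub_le_norm_det_one_add {n : ℕ} {s : ℝ} (hs : 0 ≤ s)
    (B : Matrix (Fin n) (Fin n) ℂ) (hB : ∑ i, ∑ j, ‖B i j‖ ^ 2 ≤ n * s ^ 2)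
    (hns : n * s ^ 2 ≤ 1 / 9) : (1 - s) ^ n ≤ ‖(1 + B).det‖ := by
  obtain ⟨d, hdet, hd⟩ := exists_det_one_add_eq_prod B
  have hd' : ∑ i, ‖d i‖ ^ 2 ≤ Fintype.card (Fin n) * s ^ 2 := by simpa using hd.trans hB
  have hd1 : ∀ i, 0 ≤ 1 - ‖d i‖ := fun i => by
    have := (single_le_sum (fun j _ => sq_nonneg ‖d j‖) (mem_univ i)).trans hd'
    simp only [Fintype.card_fin] at this
    nlinarith [norm_nonneg (d i)]
  calc (1 - s) ^ n ≤ ∏ i, (1 - ‖d i‖) := by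
        simpa using pow_one_sub_le_prod_one_sub hs (fun i => ‖d i‖) hd' (by simpa using hns)
    _ ≤ ∏ i, ‖1 + d i‖ := prod_le_prod (fun i _ => hd1 i) fun i _ => by
        simpa using norm_sub_norm_le (1 : ℂ) (-d i)
    _ = ‖(1 + B).det‖ := by rw [hdet, norm_prod]

theorem pow_one_sub_le_det_one_add {n : ℕ} {s : ℝ} (hs : 0 ≤ s)
    (B : Matrix (Fin n) (Fin n) ℝ) (hB : ∑ i, ∑ j, B i j ^ 2 ≤ n * s ^ 2)
    (hns : n * s ^ 2 ≤ 1 / 9) : (1 - s) ^ n ≤ (1 + B).det := by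
  have hbound : ∀ x ∈ Set.Icc (0 : ℝ) 1, (1 - x * s) ^ n ≤ |(1 + x • B).det| := by
    intro x hx
    have hx2 : x ^ 2 ≤ 1 := by nlinarith [hx.1, hx.2]
    have hxB : ∑ i, ∑ j, ‖Complex.ofRealHom.mapMatrix (x • B) i j‖ ^ 2 ≤ n * (x * s) ^ 2 := by
      simp only [RingHom.mapMatrix_apply, map_apply, smul_apply, smul_eq_mul,
        Complex.ofRealHom_eq_coe, Complex.norm_real, Real.norm_eq_abs, sq_abs, mul_pow, ← mul_sum]
      nlinarith [sq_nonneg x]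
    have hxs : n * (x * s) ^ 2 ≤ 1 / 9 := by nlinarith [sq_nonneg s, hx2]
    have h := pow_one_sub_le_norm_det_one_add (mul_nonneg hx.1 hs) _ hxB hxs
    rwa [← map_one Complex.ofRealHom.mapMatrix, ← map_add, ← RingHom.map_det,
      Complex.ofRealHom_eq_coe, Complex.norm_real, Real.norm_eq_abs] at h
  have hpos : ∀ x ∈ Set.Icc (0 : ℝ) 1, 0 < (1 - x * s) ^ n := fun x hx => by
    rcases n.eq_zero_or_pos with rfl | hn
    · simp
    have hs3 : s ≤ 1 / 3 := by nlinarith [(Nat.one_le_cast (α := ℝ)).mpr hn]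
    exact pow_pos (by nlinarith [hx.1, hx.2]) n
  have hdet : 0 < (1 + B).det := by
    by_contra h
    obtain ⟨x, hx, hx0⟩ := intermediate_value_Icc' zero_le_one
      (f := fun x : ℝ => (1 + x • B).det) (by fun_prop) ⟨by simpa using h, by simp⟩
    have := hbound x hx
    rw [show (1 + x • B).det = 0 from hx0, abs_zero] at this
    linarith [hpos x hx]
  simpa [abs_of_pos hdet] using hbound 1 ⟨zero_le_one, le_rfl⟩

lemma sq_mul_sum_sq_le_sum_sq_mul {m n p : Type*} [Fintype m] [Fintype n] [Fintype p]
    {A : Matrix m n ℝ} {γ : ℝ} (hγ : 0 ≤ γ)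
    (hA : ∀ x : n → ℝ, γ * √(∑ i, x i ^ 2) ≤ √(∑ i, (A *ᵥ x) i ^ 2)) (B : Matrix n p ℝ) :
    γ ^ 2 * ∑ i, ∑ j, B i j ^ 2 ≤ ∑ i, ∑ j, (A * B) i j ^ 2 := by
  have hcol : ∀ j, γ ^ 2 * ∑ i, B i j ^ 2 ≤ ∑ i, (A * B) i j ^ 2 := fun j => by
    have h := hA fun i => B i j
    rwa [← Real.sqrt_sq hγ, ← Real.sqrt_mul (sq_nonneg γ),
      Real.sqrt_le_sqrt_iff (sum_nonneg fun i _ => sq_nonneg _)] at h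
  rw [sum_comm, mul_sum, sum_comm (f := fun i j => (A * B) i j ^ 2)]
  exact sum_le_sum fun j _ => hcol j

lemma det_add_div_det {n K : Type*} [Fintype n] [DecidableEq n] [Field K]
    {A : Matrix n n K} (hA : IsUnit A.det) (E : Matrix n n K) :
    (A + E).det / A.det = (1 + A⁻¹ * E).det := by
  rw [div_eq_iff hA.ne_zero, mul_comm, ← det_mul, mul_add, mul_one,
    mul_nonsing_inv_cancel_left _ _ hA]

end Matrix

/-- Determinant perturbation bound: if `A` has smallest singular value at least `γ`
(in the Euclidean norm sense) and `‖E‖_F ≤ √K·δ` with `γ > 5·√K·δ`, then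
`det(A+E)/det(A) ≥ (1 − δ/γ)^K`. -/
theorem stmt_1 (K : ℕ) (A E : Matrix (Fin K) (Fin K) ℝ) (γ δ : ℝ)
    (hγ : 0 < γ) (hδ : 0 ≤ δ) (hsmall : 5 * Real.sqrt K * δ < γ)
    (hAinv : IsUnit A.det)
    (hsv : ∀ x : Fin K → ℝ,
      γ * Real.sqrt (∑ i, x i ^ 2) ≤ Real.sqrt (∑ i, A.mulVec x i ^ 2))
    (hF : Real.sqrt (∑ i, ∑ j, E i j ^ 2) ≤ Real.sqrt K * δ) :
    (1 - δ / γ) ^ K ≤ (A + E).det / A.det := by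
  have hsqK : √(K : ℝ) ^ 2 = K := Real.sq_sqrt K.cast_nonneg
  have hE : ∑ i, ∑ j, E i j ^ 2 ≤ K * δ ^ 2 := by
    rw [Real.sqrt_le_left (by positivity), mul_pow, hsqK] at hF
    exact hF
  have hB : ∑ i, ∑ j, (A⁻¹ * E) i j ^ 2 ≤ K * (δ / γ) ^ 2 := by
    have h := sq_mul_sum_sq_le_sum_sq_mul hγ.le hsv (A⁻¹ * E)
    rw [mul_nonsing_inv_cancel_left _ _ hAinv] at h
    rw [div_pow, ← mul_div_assoc, le_div_iff₀ (by positivity)]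
    linarith
  have hKs : K * (δ / γ) ^ 2 ≤ 1 / 9 := by
    have h5 : √(K : ℝ) * δ / γ < 1 / 5 := by
      rw [div_lt_iff₀ hγ]
      linarith
    have h0 : 0 ≤ √(K : ℝ) * δ / γ := by positivity
    calc (K : ℝ) * (δ / γ) ^ 2 = (√(K : ℝ) * δ / γ) ^ 2 := by
          rw [mul_div_assoc, mul_pow, hsqK]
      _ ≤ 1 / 9 := by nlinarith
  rw [det_add_div_det hAinv]
  exact pow_one_sub_le_det_one_add (div_nonneg hδ hγ.le) _ hB hKs
end

section
/- Let A be a V×K real matrix with nonnegative entries whose every row is nonzero, and let R be a K×K real matrix with nonnegative entries. Set Q = A·R·Aᵀ, and for each k let σ_k = ∑_j (R·Aᵀ)_{k,j}; assume σ_k > 0 for every k. Suppose A is separable with anchor indices s₁, …, s_K: for each k, A_{s_k,k} > 0 and A_{s_k,k′} = 0 for all k′ ≠ k. Let Q̄ be the matrix obtained from Q by dividing each row by its (positive) row sum. Then for every k and j, the anchor row satisfies Q̄_{s_k,j} = (R·Aᵀ)_{k,j} / σ_k. -/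
open Finset

theorem Matrix.mul_apply_of_row_eq_zero_of_ne {m n o α : Type*} [Fintype n]
    [NonUnitalNonAssocSemiring α] (A : Matrix m n α) (M : Matrix n o α) {i : m} {k : n}
    (hA : ∀ k', k' ≠ k → A i k' = 0) (j : o) :
    (A * M) i j = A i k * M k j := by
  rw [Matrix.mul_apply, Finset.sum_eq_single_of_mem k (mem_univ k)]
  intro k' _ hk'
  rw [hA k' hk', zero_mul]

theorem div_sum_mul_left {ι K : Type*} [Fintype ι] [Field K] {c : K} (hc : c ≠ 0)
    (v : ι → K) (j : ι) :
    c * v j / ∑ j', c * v j' = v j / ∑ j', v j' := by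
  rw [← mul_sum, mul_div_mul_left _ _ hc]

theorem stmt_12_general (V K : ℕ) (A : Matrix (Fin V) (Fin K) ℝ) (R : Matrix (Fin K) (Fin K) ℝ)
    (σ : Fin K → ℝ) (hσ : ∀ k, σ k = ∑ j, (R * A.transpose) k j)
    (s : Fin K → Fin V)
    (hanchor_pos : ∀ k, 0 < A (s k) k)
    (hanchor_zero : ∀ k k', k' ≠ k → A (s k) k' = 0)
    (Q : Matrix (Fin V) (Fin V) ℝ) (hQ : Q = A * R * A.transpose)
    (Qbar : Matrix (Fin V) (Fin V) ℝ)
    (hQbar : ∀ i j, Qbar i j = Q i j / ∑ j', Q i j') :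
    ∀ k j, Qbar (s k) j = (R * A.transpose) k j / σ k := by
  intro k j
  have hanchor_row : ∀ j', Q (s k) j' = A (s k) k * (R * A.transpose) k j' := by
    rw [hQ, Matrix.mul_assoc]
    exact Matrix.mul_apply_of_row_eq_zero_of_ne A _ (hanchor_zero k)
  simp only [hQbar, hσ, hanchor_row]
  exact div_sum_mul_left (hanchor_pos k).ne' _ j

/-- Row-normalized anchor rows of `Q = A·R·Aᵀ`: if `A` is separable with anchor indices
`s k`, then the row of the row-normalized matrix `Q̄` at the anchor word `s k` equals the
normalized `k`-th row of `R·Aᵀ`. -/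
theorem stmt_12 (V K : ℕ) (A : Matrix (Fin V) (Fin K) ℝ) (R : Matrix (Fin K) (Fin K) ℝ)
    (hA0 : ∀ i k, 0 ≤ A i k) (hArow : ∀ i, ∃ k, A i k ≠ 0)
    (hR0 : ∀ k l, 0 ≤ R k l)
    (σ : Fin K → ℝ) (hσ : ∀ k, σ k = ∑ j, (R * A.transpose) k j)
    (hσpos : ∀ k, 0 < σ k)
    (s : Fin K → Fin V)
    (hanchor_pos : ∀ k, 0 < A (s k) k)
    (hanchor_zero : ∀ k k', k' ≠ k → A (s k) k' = 0)
    (Q : Matrix (Fin V) (Fin V) ℝ) (hQ : Q = A * R * A.transpose)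
    (Qbar : Matrix (Fin V) (Fin V) ℝ)
    (hQbar : ∀ i j, Qbar i j = Q i j / ∑ j', Q i j') :
    ∀ k j, Qbar (s k) j = (R * A.transpose) k j / σ k :=
  stmt_12_general V K A R σ hσ s hanchor_pos hanchor_zero Q hQ Qbar hQbar
end

section
/- Let A be a V×K real matrix with nonnegative entries whose every row is nonzero, and let R be a K×K real matrix with nonnegative entries. Set Q = A·R·Aᵀ, and for each k let σ_k = ∑_j (R·Aᵀ)_{k,j}; assume σ_k > 0 for every k. Suppose A is separable with anchor indices s₁, …, s_K: for each k, A_{s_k,k} > 0 and A_{s_k,k′} = 0 for all k′ ≠ k. Let Q̄ be the matrix obtained from Q by dividing each row by its (positive) row sum. Then every row of Q̄ lies in the convex hull of the anchor rows: for every i, setting C_{i,k} = A_{i,k}·σ_k / (∑_{k′} A_{i,k′}·σ_{k′}), one has C_{i,k} ≥ 0, ∑_k C_{i,k} = 1, and Q̄_{i,j} = ∑_{k=1}^K C_{i,k} · Q̄_{s_k,j} for all j. -/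
/-!
Write `Q = A·B` with `B = R·Aᵀ`, whose row sums are the `σ k`. The row sums of `Q` are then
`∑ k, A i k * σ k`, so the `i`-th row of the row-normalization `Q̄` is the average of the rows
of the row-normalization `B̄` with weights `C i k ∝ A i k * σ k`. An anchor row `s k` of `A` is
a nonzero multiple of the `k`-th unit row, so `Q̄ (s k) = B̄ k`, and the anchor rows of `Q̄` are
exactly the rows being averaged.
-/

open Finset

namespace Matrix

variable {ι κ ν 𝕜 : Type*} [Fintype κ] [Fintype ν] [Field 𝕜]

/-- A row with zero sum is sent to zero, since `x / 0 = 0`. -/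
def rowNormalize (M : Matrix ι ν 𝕜) : Matrix ι ν 𝕜 :=
  fun i j => M i j / ∑ j', M i j'

theorem sum_mul_apply_eq_sum_mul_rowSum (A : Matrix ι κ 𝕜) (B : Matrix κ ν 𝕜) (i : ι) :
    ∑ j, (A * B) i j = ∑ k, A i k * ∑ j, B k j := by
  simp only [mul_apply, mul_sum]
  exact sum_comm

theorem rowNormalize_mul_apply (A : Matrix ι κ 𝕜) (B : Matrix κ ν 𝕜)
    (hB : ∀ k, ∑ j, B k j ≠ 0) (i : ι) (j : ν) :
    rowNormalize (A * B) i j =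
      ∑ k, A i k * (∑ j', B k j') / (∑ k', A i k' * ∑ j', B k' j') * rowNormalize B k j := by
  rw [rowNormalize, sum_mul_apply_eq_sum_mul_rowSum, mul_apply, sum_div]
  refine sum_congr rfl fun k _ => ?_
  rw [rowNormalize, div_mul_div_comm, mul_right_comm (A i k), mul_div_mul_right _ _ (hB k)]

theorem rowNormalize_mul_of_eq_zero_of_ne (A : Matrix ι κ 𝕜) (B : Matrix κ ν 𝕜) {s : ι} {k : κ}
    (hs : A s k ≠ 0) (hzero : ∀ k' ≠ k, A s k' = 0) :
    rowNormalize (A * B) s = rowNormalize B k := by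
  have hrow : ∀ j, (A * B) s j = A s k * B k j := fun j =>
    sum_eq_single k (fun k' _ hk' => by simp [hzero k' hk']) (by simp)
  ext j
  simp only [rowNormalize, hrow, ← mul_sum, mul_div_mul_left _ _ hs]

end Matrix

open Matrix in
theorem stmt_13_general (V K : ℕ) (A : Matrix (Fin V) (Fin K) ℝ) (R : Matrix (Fin K) (Fin K) ℝ)
    (hA0 : ∀ i k, 0 ≤ A i k) (hArow : ∀ i, ∃ k, A i k ≠ 0)
    (σ : Fin K → ℝ) (hσ : ∀ k, σ k = ∑ j, (R * A.transpose) k j)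
    (hσpos : ∀ k, 0 < σ k)
    (s : Fin K → Fin V)
    (hanchor_pos : ∀ k, 0 < A (s k) k)
    (hanchor_zero : ∀ k k', k' ≠ k → A (s k) k' = 0)
    (Q : Matrix (Fin V) (Fin V) ℝ) (hQ : Q = A * R * A.transpose)
    (Qbar : Matrix (Fin V) (Fin V) ℝ)
    (hQbar : ∀ i j, Qbar i j = Q i j / ∑ j', Q i j')
    (C : Matrix (Fin V) (Fin K) ℝ)
    (hC : ∀ i k, C i k = A i k * σ k / ∑ k', A i k' * σ k') :
    ∀ i, (∀ k, 0 ≤ C i k) ∧ (∑ k, C i k = 1) ∧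
      ∀ j, Qbar i j = ∑ k, C i k * Qbar (s k) j := by
  set B := R * A.transpose
  have hQbar' : Qbar = rowNormalize (A * B) := by
    ext i j
    rw [hQbar, hQ, Matrix.mul_assoc, rowNormalize]
  have hanchor : ∀ k, Qbar (s k) = rowNormalize B k := fun k => by
    rw [hQbar']
    exact rowNormalize_mul_of_eq_zero_of_ne A B (hanchor_pos k).ne' (hanchor_zero k)
  intro i
  have hD : 0 < ∑ k', A i k' * σ k' := by
    obtain ⟨k, hk⟩ := hArow i
    exact sum_pos' (fun l _ => mul_nonneg (hA0 i l) (hσpos l).le)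
      ⟨k, mem_univ k, mul_pos ((hA0 i k).lt_of_ne' hk) (hσpos k)⟩
  refine ⟨fun k => ?_, ?_, fun j => ?_⟩
  · rw [hC]
    exact div_nonneg (mul_nonneg (hA0 i k) (hσpos k).le) hD.le
  · simp only [hC]
    rw [← sum_div, div_self hD.ne']
  · simp only [hC, hanchor, hσ]
    rw [hQbar', rowNormalize_mul_apply A B (fun k => hσ k ▸ (hσpos k).ne')]

/-- Every row of the row-normalized matrix `Q̄` (where `Q = A·R·Aᵀ` and `A` is separable
with anchor indices `s k`) lies in the convex hull of the anchor rows, with convex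
coefficients `C i k = A i k · σ k / ∑_{k'} A i k' · σ k'`. -/
theorem stmt_13 (V K : ℕ) (A : Matrix (Fin V) (Fin K) ℝ) (R : Matrix (Fin K) (Fin K) ℝ)
    (hA0 : ∀ i k, 0 ≤ A i k) (hArow : ∀ i, ∃ k, A i k ≠ 0)
    (hR0 : ∀ k l, 0 ≤ R k l)
    (σ : Fin K → ℝ) (hσ : ∀ k, σ k = ∑ j, (R * A.transpose) k j)
    (hσpos : ∀ k, 0 < σ k)
    (s : Fin K → Fin V)
    (hanchor_pos : ∀ k, 0 < A (s k) k)
    (hanchor_zero : ∀ k k', k' ≠ k → A (s k) k' = 0)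
    (Q : Matrix (Fin V) (Fin V) ℝ) (hQ : Q = A * R * A.transpose)
    (Qbar : Matrix (Fin V) (Fin V) ℝ)
    (hQbar : ∀ i j, Qbar i j = Q i j / ∑ j', Q i j')
    (C : Matrix (Fin V) (Fin K) ℝ)
    (hC : ∀ i k, C i k = A i k * σ k / ∑ k', A i k' * σ k') :
    ∀ i, (∀ k, 0 ≤ C i k) ∧ (∑ k, C i k = 1) ∧
      ∀ j, Qbar i j = ∑ k, C i k * Qbar (s k) j :=
  stmt_13_general V K A R hA0 hArow σ hσ hσpos s hanchor_pos hanchor_zero Q hQ Qbar hQbar C hC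
end
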